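/- The function F(κ) = E_k(κ)/E_{k-1}(κ) is strictly increasing on Γ_k^+, i.e. ∂F/∂κ_p > 0 for every p = 1,…,n and every κ ∈ Γ_k^+. -/

import Mathlib

/-!
Along the line `κ + t • e_p` both `E_k` and `E_{k-1}` are affine in `t`, with slopes proportional
to the elementary symmetric functions `a = e_{k-2}`, `b = e_{k-1}` of the remaining `n - 1` entries.
Writing also `c = e_k` for those entries, the derivative of `E_k / E_{k-1}` in direction `e_p` is a
positive multiple of `b² - a c`. Newton's inequality, in the strict form `a c < b²` valid whenever
`a c > 0`, makes this positive; when `a c ≤ 0` positivity comes from `E_{k-1}, E_k > 0` instead.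

Newton's inequality is proved by Rolle's theorem: differentiating `∏ (X + r)` repeatedly, reversing
it, and differentiating again keeps all roots real, and leads to a quadratic whose coefficients are
`e_i, e_{i+1}, e_{i+2}` up to factorials; its discriminant is nonnegative.
-/

/-- The normalized `k`-th elementary symmetric function of `κ ∈ ℝⁿ`. -/
noncomputable def Esym (n k : ℕ) (κ : Fin n → ℝ) : ℝ :=
  ((n.choose k : ℝ))⁻¹ * ∑ s ∈ Finset.univ.powersetCard k, ∏ i ∈ s, κ i

/-- The positive cone `Γ_k^+`. -/
def GammaPlus (n k : ℕ) : Set (Fin n → ℝ) :=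
  {x | ∀ i : ℕ, 1 ≤ i → i ≤ k → 0 < Esym n i x}

/-- The curvature quotient `F = E_k / E_{k-1}`. -/
noncomputable def Fquot (n k : ℕ) (κ : Fin n → ℝ) : ℝ :=
  Esym n k κ / Esym n (k - 1) κ

open Polynomial
open scoped Nat

namespace Polynomial

theorem Splits.derivative_of_real {p : ℝ[X]} (hp : p.Splits) : (derivative p).Splits := by
  rw [splits_iff_card_roots] at hp ⊢
  have hrolle := card_roots_le_derivative p
  have hdeg := natDegree_derivative_le p
  have hroots := (derivative p).card_roots'
  omega

theorem Splits.iterate_derivative_of_real {p : ℝ[X]} (hp : p.Splits) (k : ℕ) :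
    (derivative^[k] p).Splits := by
  induction k with
  | zero => exact hp
  | succ k ih => rw [Function.iterate_succ_apply']; exact ih.derivative_of_real

theorem Splits.reverse {K : Type*} [Field K] {p : K[X]} (hp : p.Splits) : p.reverse.Splits := by
  induction hp using Submonoid.closure_induction with
  | mem f hf =>
    rcases hf with ⟨a, rfl⟩ | ⟨a, rfl⟩
    · simp
    · exact .of_natDegree_le_one ((reverse_natDegree_le _).trans (natDegree_X_add_C a).le)
  | one => rw [← C_1, reverse_C]; exact Splits.C 1
  | mul f g _ _ hf hg => rw [reverse_mul_of_domain]; exact hf.mul hg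

theorem discrim_coeff_nonneg_of_splits {p : ℝ[X]} (hp : p.Splits) (hdeg : p.natDegree ≤ 2) :
    0 ≤ discrim (p.coeff 2) (p.coeff 1) (p.coeff 0) := by
  rcases eq_or_ne (p.coeff 2) 0 with h2 | h2
  · rw [discrim, h2, mul_zero, zero_mul, sub_zero]; exact sq_nonneg _
  have hdeg2 : p.natDegree = 2 := hdeg.antisymm (le_natDegree_of_ne_zero h2)
  obtain ⟨x, hx⟩ := Multiset.card_pos_iff_exists_mem.mp
    (by rw [splits_iff_card_roots.mp hp, hdeg2]; norm_num : 0 < p.roots.card)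
  have hroot : p.coeff 2 * (x * x) + p.coeff 1 * x + p.coeff 0 = 0 := by
    have := (mem_roots (ne_zero_of_natDegree_gt (by omega : 1 < p.natDegree))).mp hx
    rw [IsRoot, eval_eq_sum_range, hdeg2] at this
    simp only [Finset.sum_range_succ, Finset.sum_range_zero] at this
    linear_combination this
  rw [discrim_eq_sq_of_quadratic_eq_zero hroot]
  exact sq_nonneg _

end Polynomial

namespace Multiset

theorem esymm_cons_succ {R : Type*} [CommSemiring R] (a : R) (s : Multiset R) (k : ℕ) :
    (a ::ₘ s).esymm (k + 1) = a * s.esymm k + s.esymm (k + 1) := by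
  simp [esymm, powersetCard_cons, sum_map_mul_left, add_comm]

theorem esymm_eq_zero_of_card_lt {R : Type*} [CommSemiring R] {s : Multiset R} {k : ℕ}
    (h : card s < k) : s.esymm k = 0 := by
  simp [esymm, powersetCard_eq_empty _ h]

theorem coeff_iterate_derivative_prod_X_add_C (S : Multiset ℝ) {i u t : ℕ}
    (hS : card S = i + 2 + u) (ht : t ≤ i + 2) :
    (derivative^[u] (S.map fun r => X + C r).prod).coeff t =
      (t + u).descFactorial u * S.esymm (i + 2 - t) := by
  rw [coeff_iterate_derivative, prod_X_add_C_coeff S (by omega), hS, nsmul_eq_mul]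
  congr 2
  omega

theorem natDegree_iterate_derivative_prod_X_add_C (S : Multiset ℝ) {i u : ℕ}
    (hS : card S = i + 2 + u) :
    (derivative^[u] (S.map fun r => X + C r).prod).natDegree = i + 2 := by
  have hdeg : (S.map fun r => X + C r).prod.natDegree = i + 2 + u := by
    rw [natDegree_multiset_prod_of_monic _ (by simp [monic_X_add_C])]
    simp [hS]
  refine ((natDegree_iterate_derivative _ u).trans (by omega)).antisymm
    (le_natDegree_of_ne_zero ?_)
  rw [S.coeff_iterate_derivative_prod_X_add_C hS le_rfl, Nat.sub_self]
  simp [esymm]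

/-- For `card S = i + 2 + u` this is a quadratic with real roots whose coefficients are
`e_i, e_{i+1}, e_{i+2}` up to factorials. -/
noncomputable def newtonQuadratic (S : Multiset ℝ) (i u : ℕ) : ℝ[X] :=
  derivative^[i] (derivative^[u] (S.map fun r => X + C r).prod).reverse

theorem newtonQuadratic_splits (S : Multiset ℝ) (i u : ℕ) : (S.newtonQuadratic i u).Splits :=
  ((Splits.multisetProd (by simp)).iterate_derivative_of_real u).reverse
    |>.iterate_derivative_of_real i

theorem natDegree_newtonQuadratic_le (S : Multiset ℝ) {i u : ℕ} (hS : card S = i + 2 + u) :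
    (S.newtonQuadratic i u).natDegree ≤ 2 := by
  have := reverse_natDegree_le (derivative^[u] (S.map fun r => X + C r).prod)
  rw [S.natDegree_iterate_derivative_prod_X_add_C hS] at this
  exact (natDegree_iterate_derivative _ _).trans (by omega)

theorem factorial_mul_coeff_newtonQuadratic (S : Multiset ℝ) {i u a b : ℕ}
    (hS : card S = i + 2 + u) (hab : a + b = 2) :
    (a ! * b ! : ℝ) * (S.newtonQuadratic i u).coeff a = (i + a)! * (u + b)! * S.esymm (i + a) := by
  rw [newtonQuadratic, coeff_iterate_derivative, coeff_reverse,
    S.natDegree_iterate_derivative_prod_X_add_C hS, revAt_le (by omega), nsmul_eq_mul,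
    show i + 2 - (a + i) = b by omega, S.coeff_iterate_derivative_prod_X_add_C hS (by omega),
    show i + 2 - b = i + a by omega]
  have ha := Nat.factorial_mul_descFactorial (show i ≤ a + i by omega)
  have hb := Nat.factorial_mul_descFactorial (show u ≤ b + u by omega)
  rw [Nat.add_sub_cancel, add_comm a] at ha
  rw [Nat.add_sub_cancel, add_comm b] at hb
  rw [add_comm a, add_comm b, ← ha, ← hb]
  push_cast
  ring

/-- Newton's inequality `E_i E_{i+2} ≤ E_{i+1}²` for the normalized `E_j = e_j / (m choose j)`,
`m = i + 2 + u`, after clearing the binomial coefficients. -/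
theorem esymm_mul_esymm_le_sq (S : Multiset ℝ) (i u : ℕ) (hS : card S = i + 2 + u) :
    ((i + 2) * (u + 2) : ℝ) * (S.esymm (i + 2) * S.esymm i) ≤
      ((i + 1) * (u + 1) : ℝ) * S.esymm (i + 1) ^ 2 := by
  set q := S.newtonQuadratic i u
  have hdisc := discrim_coeff_nonneg_of_splits (S.newtonQuadratic_splits i u)
    (S.natDegree_newtonQuadratic_le hS)
  have h0 : 2 * q.coeff 0 = (u + 2) * (u + 1) * (i ! * u !) * S.esymm i := by
    have := S.factorial_mul_coeff_newtonQuadratic hS (show 0 + 2 = 2 from rfl)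
    simp only [Nat.factorial_succ, Nat.factorial_zero, add_zero] at this
    push_cast at this
    linear_combination this
  have h1 : q.coeff 1 = (i + 1) * (u + 1) * (i ! * u !) * S.esymm (i + 1) := by
    have := S.factorial_mul_coeff_newtonQuadratic hS (show 1 + 1 = 2 from rfl)
    simp only [Nat.factorial_succ, Nat.factorial_zero] at this
    push_cast at this
    linear_combination this
  have h2 : 2 * q.coeff 2 = (i + 2) * (i + 1) * (i ! * u !) * S.esymm (i + 2) := by
    have := S.factorial_mul_coeff_newtonQuadratic hS (show 2 + 0 = 2 from rfl)
    simp only [Nat.factorial_succ, Nat.factorial_zero, add_zero] at this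
    push_cast at this
    linear_combination this
  refine le_of_mul_le_mul_left ?_ (by positivity : (0 : ℝ) < (i + 1) * (u + 1) * (i ! * u !) ^ 2)
  calc (i + 1) * (u + 1) * (i ! * u ! : ℝ) ^ 2 * ((i + 2) * (u + 2) * (S.esymm (i + 2) * S.esymm i))
      = (2 * q.coeff 2) * (2 * q.coeff 0) := by rw [h0, h2]; ring
    _ ≤ q.coeff 1 ^ 2 := by rw [discrim] at hdisc; linarith
    _ = (i + 1) * (u + 1) * (i ! * u ! : ℝ) ^ 2 * ((i + 1) * (u + 1) * S.esymm (i + 1) ^ 2) := by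
      rw [h1]; ring

theorem esymm_mul_esymm_lt_sq (S : Multiset ℝ) (i : ℕ) (h : 0 < S.esymm (i + 2) * S.esymm i) :
    S.esymm (i + 2) * S.esymm i < S.esymm (i + 1) ^ 2 := by
  have hcard : i + 2 ≤ card S := by
    by_contra hlt
    rw [esymm_eq_zero_of_card_lt (not_le.mp hlt), zero_mul] at h
    exact h.false
  obtain ⟨u, hu⟩ := Nat.exists_eq_add_of_le hcard
  have hK : ((i + 1) * (u + 1) : ℝ) < (i + 2) * (u + 2) := by nlinarith
  exact lt_of_mul_lt_mul_left
    ((mul_lt_mul_of_pos_right hK h).trans_le (S.esymm_mul_esymm_le_sq i u hu)) (by positivity)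

theorem esymm_mul_esymm_lt_sq_of_cons (S : Multiset ℝ) (x : ℝ) (i : ℕ)
    (h1 : 0 < (x ::ₘ S).esymm (i + 1)) (h2 : 0 < (x ::ₘ S).esymm (i + 2)) :
    S.esymm (i + 2) * S.esymm i < S.esymm (i + 1) ^ 2 := by
  rw [esymm_cons_succ] at h1 h2
  rcases lt_or_ge 0 (S.esymm (i + 2) * S.esymm i) with h | h
  · exact S.esymm_mul_esymm_lt_sq i h
  rcases eq_or_ne (S.esymm (i + 1)) 0 with hb | hb
  · have hc : 0 < S.esymm (i + 2) := by simpa [hb] using h2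
    have ha : S.esymm i ≠ 0 := by rintro ha; simp [ha, hb] at h1
    rw [hb, zero_pow two_ne_zero]
    exact lt_of_le_of_ne h (mul_ne_zero hc.ne' ha)
  · exact h.trans_lt (by positivity)

end Multiset

theorem fderiv_div_apply_of_affine {E : Type*} [NormedAddCommGroup E] [NormedSpace ℝ E]
    {f g : E → ℝ} {x v : E} {A B C D : ℝ} (hfd : DifferentiableAt ℝ f x)
    (hgd : DifferentiableAt ℝ g x) (hC : C ≠ 0)
    (hf : ∀ t : ℝ, f (x + t • v) = A + t * B) (hg : ∀ t : ℝ, g (x + t • v) = C + t * D) :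
    fderiv ℝ (fun y => f y / g y) x v = (B * C - A * D) / C ^ 2 := by
  have hgx : g x = C := by simpa using hg 0
  have hA : HasDerivAt (fun t : ℝ => A + t * B) B 0 := by
    simpa using ((hasDerivAt_id (0 : ℝ)).mul_const B).const_add A
  have hC' : HasDerivAt (fun t : ℝ => C + t * D) D 0 := by
    simpa using ((hasDerivAt_id (0 : ℝ)).mul_const D).const_add C
  have hline : HasLineDerivAt ℝ (fun y => f y / g y) ((B * C - A * D) / C ^ 2) x v := by
    unfold HasLineDerivAt
    simp only [hf, hg]
    simpa using hA.fun_div hC' (by simpa using hC)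
  have hd : DifferentiableAt ℝ (fun y => f y / g y) x := by
    fun_prop (disch := rwa [hgx])
  rw [← hd.lineDeriv_eq_fderiv, hline.lineDeriv]

def coordsExcept {n : ℕ} (κ : Fin n → ℝ) (p : Fin n) : Multiset ℝ :=
  (Finset.univ.erase p).val.map κ

theorem coordsExcept_add_smul_single {n : ℕ} (κ : Fin n → ℝ) (p : Fin n) (t : ℝ) :
    coordsExcept (κ + t • Pi.single p 1) p = coordsExcept κ p :=
  Multiset.map_congr rfl fun i hi => by
    simp [Pi.single_eq_of_ne (Finset.ne_of_mem_erase (Finset.mem_val.mp hi))]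

namespace Esym

@[simp] theorem zero (n : ℕ) (κ : Fin n → ℝ) : Esym n 0 κ = 1 := by
  simp [Esym]

theorem differentiable (n k : ℕ) : Differentiable ℝ (Esym n k) := by
  unfold Esym
  fun_prop

theorem eq_esymm_cons (n k : ℕ) (κ : Fin n → ℝ) (p : Fin n) :
    Esym n k κ = ((n.choose k : ℝ))⁻¹ * (κ p ::ₘ coordsExcept κ p).esymm k := by
  rw [Esym, ← Finset.esymm_map_val, coordsExcept, ← Multiset.map_cons, Finset.erase_val,
    Multiset.cons_erase (Finset.mem_univ_val p)]

theorem esymm_cons_pos {n k : ℕ} {κ : Fin n → ℝ} (p : Fin n) (h : 0 < Esym n k κ) :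
    0 < (κ p ::ₘ coordsExcept κ p).esymm k := by
  rw [eq_esymm_cons n k κ p] at h
  exact pos_of_mul_pos_right h (by positivity)

theorem succ_eq (n j : ℕ) (κ : Fin n → ℝ) (p : Fin n) :
    Esym n (j + 1) κ = ((n.choose (j + 1) : ℝ))⁻¹ *
      (κ p * (coordsExcept κ p).esymm j + (coordsExcept κ p).esymm (j + 1)) := by
  rw [eq_esymm_cons n _ κ p, Multiset.esymm_cons_succ]

theorem succ_add_smul_single (n j : ℕ) (κ : Fin n → ℝ) (p : Fin n) (t : ℝ) :
    Esym n (j + 1) (κ + t • Pi.single p 1) =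
      Esym n (j + 1) κ + t * (((n.choose (j + 1) : ℝ))⁻¹ * (coordsExcept κ p).esymm j) := by
  rw [succ_eq n j _ p, succ_eq n j κ p, coordsExcept_add_smul_single]
  simp only [Pi.add_apply, Pi.smul_apply, Pi.single_eq_same, smul_eq_mul, mul_one]
  ring

/-- The numerator of `∂(E_{j+2} / E_{j+1}) / ∂κ_p` is positive. -/
theorem slope_mul_sub_mul_slope_pos {n j : ℕ} {κ : Fin n → ℝ} (p : Fin n) (hjn : j + 2 ≤ n)
    (h1 : 0 < Esym n (j + 1) κ) (h2 : 0 < Esym n (j + 2) κ) :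
    0 < ((n.choose (j + 2) : ℝ))⁻¹ * (coordsExcept κ p).esymm (j + 1) * Esym n (j + 1) κ -
      Esym n (j + 2) κ * (((n.choose (j + 1) : ℝ))⁻¹ * (coordsExcept κ p).esymm j) := by
  set S := coordsExcept κ p
  have hN : S.esymm (j + 2) * S.esymm j < S.esymm (j + 1) ^ 2 :=
    S.esymm_mul_esymm_lt_sq_of_cons (κ p) j (esymm_cons_pos p h1) (esymm_cons_pos p h2)
  have hc₂ : (0 : ℝ) < n.choose (j + 2) := by exact_mod_cast Nat.choose_pos hjn
  have hc₁ : (0 : ℝ) < n.choose (j + 1) := by exact_mod_cast Nat.choose_pos (by omega)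
  have key : 0 < ((n.choose (j + 2) : ℝ))⁻¹ * ((n.choose (j + 1) : ℝ))⁻¹ *
      (S.esymm (j + 1) ^ 2 - S.esymm (j + 2) * S.esymm j) :=
    mul_pos (mul_pos (inv_pos.2 hc₂) (inv_pos.2 hc₁)) (sub_pos.mpr hN)
  rw [succ_eq n (j + 1) κ p, succ_eq n j κ p]
  linear_combination key

end Esym

/-- `F = E_k/E_{k-1}` is strictly increasing on `Γ_k^+`:
`∂F/∂κ_p > 0` for every `p` and every `κ ∈ Γ_k^+`. -/
theorem statement6 (n k : ℕ) (hk1 : 1 ≤ k) (hkn : k ≤ n)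
    (κ : Fin n → ℝ) (hκ : κ ∈ GammaPlus n k) (p : Fin n) :
    0 < fderiv ℝ (Fquot n k) κ (Pi.single p 1) := by
  obtain ⟨j, rfl⟩ : ∃ j, k = j + 1 := ⟨k - 1, by omega⟩
  have hE : ∀ i, 1 ≤ i → i ≤ j + 1 → 0 < Esym n i κ := hκ
  change 0 < fderiv ℝ (fun y => Esym n (j + 1) y / Esym n j y) κ (Pi.single p 1)
  rcases j with _ | j
  · rw [fderiv_div_apply_of_affine (Esym.differentiable n 1 κ) (Esym.differentiable n 0 κ)
      one_ne_zero (Esym.succ_add_smul_single n 0 κ p) (C := 1) (D := 0) (by simp)]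
    have hn : (0 : ℝ) < n := by exact_mod_cast hkn
    simpa [Multiset.esymm] using hn
  · have hC := hE (j + 1) (by omega) (by omega)
    rw [fderiv_div_apply_of_affine (Esym.differentiable n _ κ) (Esym.differentiable n _ κ)
      hC.ne' (Esym.succ_add_smul_single n (j + 1) κ p) (Esym.succ_add_smul_single n j κ p)]
    exact div_pos (Esym.slope_mul_sub_mul_slope_pos p hkn hC (hE (j + 2) (by omega) le_rfl))
      (pow_pos hC 2)
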